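/- Let π be a strictly positive, non-uniform pmf on a finite set V, and define the temperature-scaled family π_T(v) = π(v)^{1/T}/∑_w π(w)^{1/T} for T > 0. Then the Shannon entropy H(π_T) is a strictly increasing function of T. -/
import Mathlib


open Finset

noncomputable def shannonEntropy {V : Type*} [Fintype V] (r : V → ℝ) : ℝ :=
  -∑ v, r v * Real.log (r v)

noncomputable def tempScale {V : Type*} [Fintype V] (π : V → ℝ) (T : ℝ) (v : V) : ℝ :=
  π v ^ (1 / T) / ∑ w, π w ^ (1 / T)

section aux
variable {V : Type*} [Fintype V]

/-- Strict Gibbs inequality. -/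
lemma gibbs_strict (p q : V → ℝ) (hp : ∀ v, 0 < p v) (hq : ∀ v, 0 < q v)
    (hps : ∑ v, p v = 1) (hqs : ∑ v, q v = 1) (hne : p ≠ q) :
    ∑ v, q v * Real.log (p v) < ∑ v, q v * Real.log (q v) := by
  have key : ∑ v, q v * (Real.log (p v) - Real.log (q v)) < ∑ v, (p v - q v) := by
    obtain ⟨v0, hv0⟩ := Function.ne_iff.mp hne
    apply Finset.sum_lt_sum
    · intro v _
      have h1 := Real.log_le_sub_one_of_pos (div_pos (hp v) (hq v))
      rw [Real.log_div (hp v).ne' (hq v).ne'] at h1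
      have h2 := mul_le_mul_of_nonneg_left h1 (hq v).le
      calc q v * (Real.log (p v) - Real.log (q v)) ≤ q v * (p v / q v - 1) := h2
        _ = p v - q v := by
          rw [mul_sub, mul_one, mul_div_cancel₀ _ (hq v).ne']
    · refine ⟨v0, Finset.mem_univ v0, ?_⟩
      have hx : p v0 / q v0 ≠ 1 := fun h => hv0 (by
        rwa [div_eq_one_iff_eq (hq v0).ne'] at h)
      have h1 := Real.log_lt_sub_one_of_pos (div_pos (hp v0) (hq v0)) hx
      rw [Real.log_div (hp v0).ne' (hq v0).ne'] at h1
      have h2 := (mul_lt_mul_iff_right₀ (hq v0)).mpr h1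
      calc q v0 * (Real.log (p v0) - Real.log (q v0)) < q v0 * (p v0 / q v0 - 1) := h2
        _ = p v0 - q v0 := by
          rw [mul_sub, mul_one, mul_div_cancel₀ _ (hq v0).ne']
  have e1 : ∑ v, q v * (Real.log (p v) - Real.log (q v))
      = ∑ v, q v * Real.log (p v) - ∑ v, q v * Real.log (q v) := by
    rw [← Finset.sum_sub_distrib]; congr 1; ext v; ring
  have e2 : ∑ v, (p v - q v) = 0 := by
    rw [Finset.sum_sub_distrib, hps, hqs]; ring
  rw [e1, e2] at key; linarith

lemma Zpos [Nonempty V] (π : V → ℝ) (hπ : ∀ v, 0 < π v) (T : ℝ) :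
    0 < ∑ w, π w ^ (1 / T) :=
  Finset.sum_pos (fun w _ => Real.rpow_pos_of_pos (hπ w) _) Finset.univ_nonempty

lemma tempScale_pos [Nonempty V] (π : V → ℝ) (hπ : ∀ v, 0 < π v) (T : ℝ) (v : V) :
    0 < tempScale π T v :=
  div_pos (Real.rpow_pos_of_pos (hπ v) _) (Zpos π hπ T)

lemma tempScale_sum [Nonempty V] (π : V → ℝ) (hπ : ∀ v, 0 < π v) (T : ℝ) :
    ∑ v, tempScale π T v = 1 := by
  unfold tempScale
  rw [← Finset.sum_div, div_self (Zpos π hπ T).ne']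

lemma tempScale_log [Nonempty V] (π : V → ℝ) (hπ : ∀ v, 0 < π v) (T : ℝ) (v : V) :
    Real.log (tempScale π T v)
      = (1 / T) * Real.log (π v) - Real.log (∑ w, π w ^ (1 / T)) := by
  unfold tempScale
  rw [Real.log_div (Real.rpow_pos_of_pos (hπ v) _).ne' (Zpos π hπ T).ne',
    Real.log_rpow (hπ v)]

/-- cross-entropy-type sum computed for tempScale. -/
lemma cross_sum [Nonempty V] (π : V → ℝ) (hπ : ∀ v, 0 < π v) (T₁ T₂ : ℝ) :
    ∑ v, tempScale π T₂ v * Real.log (tempScale π T₁ v)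
      = (1 / T₁) * (∑ v, tempScale π T₂ v * Real.log (π v))
        - Real.log (∑ w, π w ^ (1 / T₁)) := by
  have h : ∀ v, tempScale π T₂ v * Real.log (tempScale π T₁ v)
      = (1 / T₁) * (tempScale π T₂ v * Real.log (π v))
        - Real.log (∑ w, π w ^ (1 / T₁)) * tempScale π T₂ v := by
    intro v; rw [tempScale_log π hπ]; ring
  rw [Finset.sum_congr rfl (fun v _ => h v), Finset.sum_sub_distrib,
    ← Finset.mul_sum, ← Finset.mul_sum, tempScale_sum π hπ, mul_one]

end aux

/-- for a strictly positive non-uniform pmf `π`, the entropy of `π_T` is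
strictly increasing in the temperature `T > 0`. -/
theorem tempScale_entropy_strictMono {V : Type*} [Fintype V] (π : V → ℝ)
    (hcard : 2 ≤ Fintype.card V)
    (hπ : ∀ v, 0 < π v) (hsum : ∑ v, π v = 1)
    (hnonunif : π ≠ fun _ => 1 / (Fintype.card V : ℝ)) :
    StrictMonoOn (fun T => shannonEntropy (tempScale π T)) (Set.Ioi (0 : ℝ)) := by
  have hne : Nonempty V := Fintype.card_pos_iff.mp (by omega)
  intro T₁ hT₁ T₂ hT₂ hlt
  simp only [Set.mem_Ioi] at hT₁ hT₂
  set p := tempScale π T₁ with hp_def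
  set q := tempScale π T₂ with hq_def
  have hβ : 1 / T₂ < 1 / T₁ := one_div_lt_one_div_of_lt hT₁ hlt
  set L₁ := Real.log (∑ w, π w ^ (1 / T₁)) with hL₁
  set L₂ := Real.log (∑ w, π w ^ (1 / T₂)) with hL₂
  -- p ≠ q
  have hpq : p ≠ q := by
    intro h
    apply hnonunif
    have hd : 1 / T₁ - 1 / T₂ ≠ 0 := by
      intro h0; linarith
    have hc : ∀ v, Real.log (π v) = (L₁ - L₂) / (1 / T₁ - 1 / T₂) := by
      intro v
      have hv : Real.log (p v) = Real.log (q v) := by rw [h]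
      rw [hp_def, hq_def, tempScale_log π hπ, tempScale_log π hπ] at hv
      rw [eq_div_iff hd]
      linear_combination hv
    have hconst : ∀ v, π v = Real.exp ((L₁ - L₂) / (1 / T₁ - 1 / T₂)) := by
      intro v
      rw [← hc v, Real.exp_log (hπ v)]
    have hcard0 : (Fintype.card V : ℝ) ≠ 0 := by positivity
    have hsum' : (Fintype.card V : ℝ) * Real.exp ((L₁ - L₂) / (1 / T₁ - 1 / T₂)) = 1 :=
      calc (Fintype.card V : ℝ) * Real.exp ((L₁ - L₂) / (1 / T₁ - 1 / T₂))
          = ∑ v, π v := by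
            rw [Finset.sum_congr rfl (fun v _ => hconst v), Finset.sum_const,
              Finset.card_univ, nsmul_eq_mul]
        _ = 1 := hsum
    funext v
    rw [hconst v, eq_div_iff hcard0, mul_comm]
    exact hsum'
  -- Gibbs both ways
  have hqp := gibbs_strict p q (tempScale_pos π hπ T₁) (tempScale_pos π hπ T₂)
    (tempScale_sum π hπ T₁) (tempScale_sum π hπ T₂) hpq
  have hpq2 := gibbs_strict q p (tempScale_pos π hπ T₂) (tempScale_pos π hπ T₁)
    (tempScale_sum π hπ T₂) (tempScale_sum π hπ T₁) (Ne.symm hpq)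
  set Sp := ∑ v, p v * Real.log (π v) with hSp
  set Sq := ∑ v, q v * Real.log (π v) with hSq
  have cqp : ∑ v, q v * Real.log (p v) = (1 / T₁) * Sq - L₁ := cross_sum π hπ T₁ T₂
  have cqq : ∑ v, q v * Real.log (q v) = (1 / T₂) * Sq - L₂ := cross_sum π hπ T₂ T₂
  have cpq : ∑ v, p v * Real.log (q v) = (1 / T₂) * Sp - L₂ := cross_sum π hπ T₂ T₁
  have cpp : ∑ v, p v * Real.log (p v) = (1 / T₁) * Sp - L₁ := cross_sum π hπ T₁ T₁
  rw [cqp, cqq] at hqp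
  rw [cpq, cpp] at hpq2
  -- derive Sq < Sp
  have hS : Sq < Sp := by nlinarith [hqp, hpq2, hβ]
  -- conclude: B < C < D
  show shannonEntropy p < shannonEntropy q
  unfold shannonEntropy
  rw [cpp, cqq]
  have hT₂pos : 0 < 1 / T₂ := by positivity
  nlinarith [hpq2, hS, hT₂pos]
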